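/- Let Φ ⊆ k𝔐(X) be a set of multilinear operated polynomial identities and A = kM(Z)/I_A a unital algebra presented by a generating set Z and ideal I_A. Then the free Φ-algebra over A is F^{Φ-Alg}_{uAlg}(A) ≅ k𝔐(Z)/⟨S_Φ(Z) ∪ I_A⟩_{uOpAlg}. -/

import Mathlib

namespace OpAlg

/-- Letters of the free operated monoid `𝔐(Z)`: a letter is either a variable from `Z`
or a bracketed word `⌊w⌋`. -/
inductive OpLetter (Z : Type u) : Type u
  | var : Z → OpLetter Z
  | floor : List (OpLetter Z) → OpLetter Z

/-- The free operated monoid `𝔐(Z)` on a set `Z`: words in variables and brackets. -/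
def OpMonoid (Z : Type u) : Type u := FreeMonoid (OpLetter Z)

instance {Z : Type u} : Monoid (OpMonoid Z) :=
  inferInstanceAs (Monoid (FreeMonoid (OpLetter Z)))

/-- The variable `z` as an element of `𝔐(Z)`. -/
def OpMonoid.ofVar {Z : Type u} (z : Z) : OpMonoid Z := FreeMonoid.of (OpLetter.var z)

/-- The bracket operation `u ↦ ⌊u⌋` on `𝔐(Z)`. -/
def OpMonoid.flr {Z : Type u} (u : OpMonoid Z) : OpMonoid Z :=
  FreeMonoid.of (OpLetter.floor (FreeMonoid.toList u))

/-- The breadth of `u ∈ 𝔐(Z)`. -/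
def OpMonoid.breadth {Z : Type u} (u : OpMonoid Z) : ℕ := (FreeMonoid.toList u).length

variable {X B : Type*} [Monoid B]

mutual
  /-- Evaluation of a letter in a monoid `B` with an operator `P`, sending the
  variable `x` to `σ x`. -/
  def evalLetter (σ : X → B) (P : B → B) : OpLetter X → B
    | .var x => σ x
    | .floor w => P (evalList σ P w)
  /-- Evaluation of a list of letters (product of the letter evaluations). -/
  def evalList (σ : X → B) (P : B → B) : List (OpLetter X) → B
    | [] => 1
    | a :: w => evalLetter σ P a * evalList σ P w
end

/-- Evaluation of a word `w ∈ 𝔐(X)` in a monoid `B` with operator `P` at `σ : X → B`. -/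
def evalWord (σ : X → B) (P : B → B) (w : OpMonoid X) : B :=
  evalList σ P (FreeMonoid.toList w)

/-- Monoid-level substitution `𝔐(X) → 𝔐(Z)`, `xᵢ ↦ σ xᵢ`. -/
def substW {X Z : Type*} (σ : X → OpMonoid Z) : OpMonoid X → OpMonoid Z :=
  evalWord σ OpMonoid.flr

/-- The free unital operated algebra `k𝔐(Z)` (as a `k`-module: the monoid algebra). -/
abbrev kOpM (k : Type*) [Field k] (Z : Type*) := MonoidAlgebra k (OpMonoid Z)

/-- The operator `P` on `k𝔐(Z)`: linear extension of `u ↦ ⌊u⌋`. -/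
noncomputable def opP (k : Type*) [Field k] {Z : Type*} (f : kOpM k Z) : kOpM k Z :=
  MonoidAlgebra.ofCoeff (Finsupp.mapDomain OpMonoid.flr f.coeff)

/-- Evaluation of `φ ∈ k𝔐(X)` in a `k`-algebra `B` with operator `P` at `σ : X → B`:
`φ(σ x₁, …, σ xₙ)`. -/
noncomputable def evalPoly (k : Type*) [Field k] {X B : Type*} [Semiring B] [Module k B]
    (σ : X → B) (P : B → B) (φ : MonoidAlgebra k (OpMonoid X)) : B :=
  φ.coeff.sum fun w c => c • evalWord σ P w

/-- A context `q ∈ 𝔐⋆(Z)` : a word in `𝔐(Z ∪ {⋆})` with exactly one occurrence of `⋆`. -/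
inductive OpCtx (Z : Type u) : Type u
  | hole (u v : OpMonoid Z)
  | floor (u : OpMonoid Z) (q : OpCtx Z) (v : OpMonoid Z)

/-- Substitution `q|_w` of a word `w` for `⋆` in a context `q`. -/
def OpCtx.subst {Z : Type u} : OpCtx Z → OpMonoid Z → OpMonoid Z
  | .hole u v, w => u * w * v
  | .floor u q v, w => u * OpMonoid.flr (q.subst w) * v

/-- Substitution `q|_f` of a polynomial `f ∈ k𝔐(Z)` for `⋆` in a context `q`. -/
noncomputable def ctxPoly (k : Type*) [Field k] {Z : Type*} (q : OpCtx Z) (f : kOpM k Z) :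
    kOpM k Z :=
  MonoidAlgebra.ofCoeff (Finsupp.mapDomain q.subst f.coeff)

/-- The leading monomial of an element of a monoid algebra (the monomial `1` if the
element is a scalar or zero). -/
noncomputable def lm {k : Type*} [Field k] {G : Type*} [Monoid G] [LinearOrder G]
    (f : MonoidAlgebra k G) : G :=
  if h : f.coeff.support.Nonempty then f.coeff.support.max' h else 1

/-- Division of an element by its leading coefficient. -/
noncomputable def monicize {k : Type*} [Field k] {G : Type*} [Monoid G] [LinearOrder G]
    (f : MonoidAlgebra k G) : MonoidAlgebra k G :=
  (f.coeff (lm f))⁻¹ • f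

section GS
variable (k : Type*) [Field k] {Z : Type*} [LinearOrder (OpMonoid Z)]

/-- `f` is trivial modulo `(𝒢, w)` : `f = Σᵢ cᵢ qᵢ|_{sᵢ}` with `qᵢ|_{s̄ᵢ} < w`, `sᵢ ∈ 𝒢`. -/
def TrivialMod (𝒢 : Set (kOpM k Z)) (w : OpMonoid Z) (f : kOpM k Z) : Prop :=
  f ∈ Submodule.span k
    {g : kOpM k Z | ∃ s ∈ 𝒢, ∃ q : OpCtx Z, g = ctxPoly k q s ∧ q.subst (lm s) < w}

/-- `𝒢 ⊆ k𝔐(Z)` is an operated Gröbner–Shirshov basis: all intersection compositions and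
all inclusion compositions of (monicized) pairs of elements of `𝒢` are trivial. -/
def IsOpGS (𝒢 : Set (kOpM k Z)) : Prop :=
  (∀ f ∈ 𝒢, ∀ g ∈ 𝒢, ∀ u v w : OpMonoid Z,
      w = lm f * u → w = v * lm g →
      max (OpMonoid.breadth (lm f)) (OpMonoid.breadth (lm g)) < OpMonoid.breadth w →
      OpMonoid.breadth w < OpMonoid.breadth (lm f) + OpMonoid.breadth (lm g) →
      TrivialMod k 𝒢 w
        (monicize f * MonoidAlgebra.single u 1 - MonoidAlgebra.single v 1 * monicize g)) ∧
  (∀ f ∈ 𝒢, ∀ g ∈ 𝒢, ∀ q : OpCtx Z, ∀ w : OpMonoid Z,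
      w = lm f → w = q.subst (lm g) →
      TrivialMod k 𝒢 w (monicize f - ctxPoly k q (monicize g)))

end GS

section Assoc
variable (k : Type*) [Field k] {Z : Type*} [LinearOrder (FreeMonoid Z)]

/-- The free unital algebra `kM(Z)` (noncommutative polynomials). -/
abbrev kM (k : Type*) [Field k] (Z : Type*) := MonoidAlgebra k (FreeMonoid Z)

/-- Triviality modulo `(G, w)` in the classical associative sense. -/
def ATrivialMod (G : Set (kM k Z)) (w : FreeMonoid Z) (f : kM k Z) : Prop :=
  f ∈ Submodule.span k
    {g : kM k Z | ∃ s ∈ G, ∃ u v : FreeMonoid Z,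
      g = MonoidAlgebra.single u 1 * s * MonoidAlgebra.single v 1 ∧ u * lm s * v < w}

/-- `G ⊆ kM(Z)` is a Gröbner–Shirshov basis in the classical associative sense. -/
def IsAssocGS (G : Set (kM k Z)) : Prop :=
  (∀ f ∈ G, ∀ g ∈ G, ∀ u v w : FreeMonoid Z,
      w = lm f * u → w = v * lm g →
      max (FreeMonoid.toList (lm f)).length (FreeMonoid.toList (lm g)).length <
        (FreeMonoid.toList w).length →
      (FreeMonoid.toList w).length <
        (FreeMonoid.toList (lm f)).length + (FreeMonoid.toList (lm g)).length →
      ATrivialMod k G w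
        (monicize f * MonoidAlgebra.single u 1 - MonoidAlgebra.single v 1 * monicize g)) ∧
  (∀ f ∈ G, ∀ g ∈ G, ∀ u v w : FreeMonoid Z,
      w = lm f → w = u * lm g * v →
      ATrivialMod k G w
        (monicize f -
          MonoidAlgebra.single u 1 * monicize g * MonoidAlgebra.single v 1))

end Assoc

/-- The embedding of the free monoid `M(Z)` into the free operated monoid `𝔐(Z)`. -/
def embW {Z : Type*} (w : FreeMonoid Z) : OpMonoid Z :=
  (FreeMonoid.map (OpLetter.var) w : FreeMonoid (OpLetter Z))

/-- The embedding `kM(Z) → k𝔐(Z)`. -/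
noncomputable def embA (k : Type*) [Field k] {Z : Type*} (f : kM k Z) : kOpM k Z :=
  MonoidAlgebra.ofCoeff (Finsupp.mapDomain embW f.coeff)

end OpAlg

namespace OpAlg

variable {X : Type*} [DecidableEq X]

mutual
  /-- Number of occurrences of the variable `x` in a letter. -/
  def countLetter (x : X) : OpLetter X → ℕ
    | .var y => if y = x then 1 else 0
    | .floor w => countList x w
  /-- Number of occurrences of the variable `x` in a list of letters. -/
  def countList (x : X) : List (OpLetter X) → ℕ
    | [] => 0
    | a :: w => countLetter x a + countList x w
end

variable (k : Type*) [Field k]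

/-- An OPI `φ ∈ k𝔐(X)` is multilinear if every monomial in its support contains every
variable exactly once. -/
def Multilinear (φ : kOpM k X) : Prop :=
  ∀ w ∈ φ.coeff.support, ∀ x : X, countList x (FreeMonoid.toList w) = 1

/-- A unital operated `k`-algebra `(B, P)` is a `Φ`-algebra if every OPI of `Φ` vanishes
under every evaluation of the variables in `B`. -/
noncomputable def IsPhiAlgebra {X : Type*} (Φ : Set (kOpM k X)) (B : Type*) [Ring B]
    [Algebra k B] (P : B → B) : Prop :=
  ∀ φ ∈ Φ, ∀ σ : X → B, evalPoly k σ P φ = 0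

/-- `S_Φ(Z)` : all substitution instances `φ(u₁, …, uₖ)`, `uᵢ ∈ 𝔐(Z)`, `φ ∈ Φ`. -/
noncomputable def SPhi {X Z : Type*} (Φ : Set (kOpM k X)) : Set (kOpM k Z) :=
  {x : kOpM k Z | ∃ φ ∈ Φ, ∃ σ : X → OpMonoid Z, x = MonoidAlgebra.ofCoeff (Finsupp.mapDomain (substW σ) φ.coeff)}

/-- The congruence of the quotient of `k𝔐(Z)` by the operated ideal generated by `S`. -/
noncomputable def opIdealCon {Z : Type*} (S : Set (kOpM k Z)) : RingCon (kOpM k Z) :=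
  sInf {c : RingCon (kOpM k Z) |
    (∀ s ∈ S, c s 0) ∧ (∀ x y, c x y → c (opP k x) (opP k y)) ∧
    (∀ (r : k) (x y), c x y → c (r • x) (r • y))}

end OpAlg

/-!
Evaluating `z ↦ f (π z)` in `B`, with brackets interpreted by `P_B`, gives an operated algebra
map `Θ : k𝔐(Z) → B`. It kills `S_Φ(Z)` because `B` satisfies `Φ` under every substitution,
and it kills `ker π` because on `kM(Z)` it restricts to `f ∘ π`; so `Θ` factors through the
quotient. It is the only such factorisation because `k𝔐(Z)` is generated as an operated
algebra by `Z`, i.e. `𝔐(Z)` is the free operated monoid on `Z`.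
-/

namespace OpAlg

section Words

variable {X Z B : Type*} [Monoid B]

theorem evalList_append (σ : X → B) (P : B → B) (l₁ l₂ : List (OpLetter X)) :
    evalList σ P (l₁ ++ l₂) = evalList σ P l₁ * evalList σ P l₂ := by
  induction l₁ with
  | nil => exact (one_mul _).symm
  | cons a l ih => rw [List.cons_append, evalList, evalList, ih, mul_assoc]

theorem evalWord_mul (σ : X → B) (P : B → B) (u v : OpMonoid X) :
    evalWord σ P (u * v) = evalWord σ P u * evalWord σ P v :=
  evalList_append σ P _ _

theorem evalWord_flr (σ : X → B) (P : B → B) (u : OpMonoid X) :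
    evalWord σ P (OpMonoid.flr u) = P (evalWord σ P u) :=
  mul_one _

def evalWordHom (σ : X → B) (P : B → B) : OpMonoid X →* B where
  toFun := evalWord σ P
  map_one' := rfl
  map_mul' := evalWord_mul σ P

theorem evalWord_embW (σ : Z → B) (P : B → B) (w : FreeMonoid Z) :
    evalWord σ P (embW w) = FreeMonoid.lift σ w := by
  have h : (evalWordHom σ P).comp (FreeMonoid.map OpLetter.var : FreeMonoid Z →* OpMonoid Z) =
      FreeMonoid.lift σ :=
    FreeMonoid.hom_eq fun z => mul_one (σ z)
  exact DFunLike.congr_fun h w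

variable {σ : X → B} {P : B → B} {φ : OpMonoid X →* B}

mutual

theorem map_of_eq_evalLetter (hvar : ∀ x, φ (OpMonoid.ofVar x) = σ x)
    (hflr : ∀ u, φ (OpMonoid.flr u) = P (φ u)) :
    ∀ a : OpLetter X, φ (FreeMonoid.of a) = evalLetter σ P a
  | .var x => hvar x
  | .floor l => by
    rw [evalLetter, ← map_ofList_eq_evalList hvar hflr l]
    exact hflr (FreeMonoid.ofList l)

theorem map_ofList_eq_evalList (hvar : ∀ x, φ (OpMonoid.ofVar x) = σ x)
    (hflr : ∀ u, φ (OpMonoid.flr u) = P (φ u)) :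
    ∀ l : List (OpLetter X), φ (FreeMonoid.ofList l) = evalList σ P l
  | [] => map_one φ
  | a :: l =>
    (map_mul φ (FreeMonoid.of a : OpMonoid X) (FreeMonoid.ofList l)).trans
      (congrArg₂ (· * ·) (map_of_eq_evalLetter hvar hflr a) (map_ofList_eq_evalList hvar hflr l))

end

/-- `𝔐(X)` is the free operated monoid on `X`. -/
theorem eq_evalWord_of_map_flr (hvar : ∀ x, φ (OpMonoid.ofVar x) = σ x)
    (hflr : ∀ u, φ (OpMonoid.flr u) = P (φ u)) (w : OpMonoid X) :
    φ w = evalWord σ P w :=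
  map_ofList_eq_evalList hvar hflr (FreeMonoid.toList w)

theorem evalWord_substW (τ : Z → B) (P : B → B) (σ : X → OpMonoid Z) (w : OpMonoid X) :
    evalWord τ P (substW σ w) = evalWord (fun x => evalWord τ P (σ x)) P w := by
  refine eq_evalWord_of_map_flr (φ := (evalWordHom τ P).comp (evalWordHom σ OpMonoid.flr))
    (fun x => congrArg (evalWord τ P) (mul_one (σ x))) (fun u => ?_) w
  change evalWord τ P (substW σ (OpMonoid.flr u)) = P (evalWord τ P (substW σ u))
  rw [substW, evalWord_flr, evalWord_flr]

end Words

section Single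

variable {k : Type*} [Field k] {Z : Type*}

theorem opP_single (u : OpMonoid Z) (c : k) :
    opP k (MonoidAlgebra.single u c) = MonoidAlgebra.single (OpMonoid.flr u) c :=
  congrArg MonoidAlgebra.ofCoeff (Finsupp.mapDomain_single ..)

theorem embA_single (w : FreeMonoid Z) (c : k) :
    embA k (MonoidAlgebra.single w c) = MonoidAlgebra.single (embW w) c :=
  congrArg MonoidAlgebra.ofCoeff (Finsupp.mapDomain_single ..)

end Single

section EvalHom

variable {k : Type*} [Field k] {Z B : Type*} [Ring B] [Algebra k B]

noncomputable def evalHom (σ : Z → B) (P : B → B) : kOpM k Z →ₐ[k] B :=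
  MonoidAlgebra.lift k B (OpMonoid Z) (evalWordHom σ P)

theorem evalHom_single (σ : Z → B) (P : B → B) (u : OpMonoid Z) (c : k) :
    evalHom σ P (MonoidAlgebra.single u c) = c • evalWord σ P u := by
  rw [evalHom, MonoidAlgebra.lift_single]
  rfl

theorem evalHom_ofCoeff_mapDomain (σ : Z → B) (P : B → B) {α : Type*} (h : α → OpMonoid Z)
    (x : α →₀ k) :
    evalHom σ P (MonoidAlgebra.ofCoeff (Finsupp.mapDomain h x)) =
      x.sum fun u c => c • evalWord σ P (h u) := by
  rw [Finsupp.mapDomain, MonoidAlgebra.ofCoeff_finsuppSum, map_finsuppSum]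
  exact Finsupp.sum_congr fun u _ => evalHom_single σ P (h u) _

theorem evalHom_opP (σ : Z → B) (P : B →ₗ[k] B) (x : kOpM k Z) :
    evalHom σ P (opP k x) = P (evalHom σ P x) := by
  rw [opP, evalHom_ofCoeff_mapDomain, MonoidAlgebra.lift_unique (evalHom σ P) x,
    map_finsuppSum]
  exact Finsupp.sum_congr fun u _ => by rw [evalWord_flr, evalHom_single, one_smul, map_smul]

theorem evalHom_eq_zero_of_mem_SPhi {X : Type*} {Φ : Set (kOpM k X)} {P : B → B}
    (hΦ : IsPhiAlgebra k Φ B P) (σ : Z → B) {s : kOpM k Z} (hs : s ∈ SPhi k Φ) :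
    evalHom σ P s = 0 := by
  obtain ⟨φ, hφ, τ, rfl⟩ := hs
  rw [evalHom_ofCoeff_mapDomain, ← hΦ φ hφ fun x => evalWord σ P (τ x), evalPoly]
  exact Finsupp.sum_congr fun w _ => by rw [evalWord_substW]

theorem evalHom_embA (P : B → B) (g : kM k Z →ₐ[k] B) (x : kM k Z) :
    evalHom (fun z => g (MonoidAlgebra.single (FreeMonoid.of z) 1)) P (embA k x) = g x := by
  rw [embA, evalHom_ofCoeff_mapDomain, MonoidAlgebra.lift_unique g x]
  refine Finsupp.sum_congr fun w _ => ?_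
  rw [evalWord_embW]
  congr 1
  exact DFunLike.congr_fun (FreeMonoid.hom_eq (f := FreeMonoid.lift _)
    (g := (g : kM k Z →* B).comp (MonoidAlgebra.of k (FreeMonoid Z))) fun z => rfl) w

theorem eq_evalHom {σ : Z → B} {P : B → B} (G : kOpM k Z →ₐ[k] B)
    (hvar : ∀ z, G (MonoidAlgebra.single (OpMonoid.ofVar z) 1) = σ z)
    (hP : ∀ x, G (opP k x) = P (G x)) :
    G = evalHom σ P := by
  rw [MonoidAlgebra.lift_unique' G, evalHom]
  congr 1
  ext w
  refine eq_evalWord_of_map_flr hvar (fun u => ?_) w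
  exact (congrArg G (opP_single u 1)).symm.trans (hP _)

end EvalHom

theorem opIdealCon_le_ker {k : Type*} [Field k] {Z B : Type*} [Ring B] [Algebra k B]
    {S : Set (kOpM k Z)} (Θ : kOpM k Z →ₐ[k] B) (P : B → B)
    (hS : ∀ s ∈ S, Θ s = 0) (hP : ∀ x, Θ (opP k x) = P (Θ x)) :
    opIdealCon k S ≤ RingCon.ker Θ.toRingHom := by
  refine sInf_le ⟨fun s hs => ?_, fun x y h => ?_, fun r x y h => ?_⟩
  · exact (hS s hs).trans (map_zero Θ).symm
  · exact (hP x).trans ((congrArg P h).trans (hP y).symm)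
  · exact (map_smul Θ r x).trans ((congrArg (r • ·) h).trans (map_smul Θ r y).symm)

end OpAlg

open OpAlg in
/-- Let `Φ ⊆ k𝔐(X)` be a set of multilinear OPIs and
`A = kM(Z)/I_A` a unital algebra presented by a generating set `Z` (via a surjection
`π : kM(Z) → A` with kernel `I_A`). Then `k𝔐(Z)/⟨S_Φ(Z) ∪ I_A⟩_{uOpAlg}` is the free
`Φ`-algebra over `A`. -/
theorem free_Phi_algebra_presentation
    (k : Type*) [Field k] (X Z : Type*) [DecidableEq X]
    (Φ : Set (kOpM k X)) (hml : ∀ φ ∈ Φ, Multilinear k φ)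
    (A : Type*) [Ring A] [Algebra k A]
    (π : kM k Z →ₐ[k] A) (hπ : Function.Surjective π) :
    -- `I_A := ker π`, and the quotient is the free `Φ`-algebra over `A`:
    ∀ (B : Type*) [Ring B] [Algebra k B], ∀ (P_B : B →ₗ[k] B),
      IsPhiAlgebra k Φ B P_B → ∀ f : A →ₐ[k] B,
      ∃! F : (opIdealCon k (SPhi k (X := X) (Z := Z) Φ ∪
          embA k '' {x : kM k Z | π x = 0})).Quotient →+* B,
        (∀ r : k,
          F ((algebraMap k (kOpM k Z) r : kOpM k Z) : (opIdealCon k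
              (SPhi k (X := X) (Z := Z) Φ ∪
                embA k '' {x : kM k Z | π x = 0})).Quotient) = algebraMap k B r) ∧
        (∀ x : kOpM k Z,
          F ((opP k x : kOpM k Z) : (opIdealCon k (SPhi k (X := X) (Z := Z) Φ ∪
              embA k '' {x : kM k Z | π x = 0})).Quotient) =
            P_B (F ((x : kOpM k Z) : (opIdealCon k (SPhi k (X := X) (Z := Z) Φ ∪
              embA k '' {x : kM k Z | π x = 0})).Quotient))) ∧
        (∀ x : kM k Z,
          F ((embA k x : kOpM k Z) : (opIdealCon k (SPhi k (X := X) (Z := Z) Φ ∪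
              embA k '' {x : kM k Z | π x = 0})).Quotient) = f (π x)) := by
  intro B _ _ P_B hΦ f
  set Θ : kOpM k Z →ₐ[k] B :=
    evalHom (fun z => f.comp π (MonoidAlgebra.single (FreeMonoid.of z) 1)) P_B
  have hΘA : ∀ x, Θ (embA k x) = f (π x) := evalHom_embA P_B (f.comp π)
  have hle : opIdealCon k (SPhi k Φ ∪ embA k '' {x | π x = 0}) ≤ RingCon.ker Θ.toRingHom := by
    refine opIdealCon_le_ker Θ P_B (fun s hs => ?_) (evalHom_opP _ P_B)
    rcases hs with hs | ⟨x, hx, rfl⟩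
    · exact evalHom_eq_zero_of_mem_SPhi hΦ _ hs
    · rw [hΘA, show π x = 0 from hx, map_zero]
  refine ⟨RingCon.lift _ Θ.toRingHom hle, ⟨Θ.commutes, evalHom_opP _ P_B, hΘA⟩, ?_⟩
  rintro F ⟨hF_alg, hF_P, hF_A⟩
  let G : kOpM k Z →ₐ[k] B := { F.comp (RingCon.mk' _) with commutes' := hF_alg }
  have hG_var : ∀ z, G (MonoidAlgebra.single (OpMonoid.ofVar z) 1) =
      f.comp π (MonoidAlgebra.single (FreeMonoid.of z) 1) := fun z =>
    (congrArg (fun y : kOpM k Z => F y) (embA_single (FreeMonoid.of z) (1 : k))).symm.trans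
      (hF_A _)
  have hG : G = Θ := eq_evalHom G hG_var hF_P
  exact RingCon.Quotient.hom_ext (congrArg AlgHom.toRingHom hG)
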